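/- arXiv:1611.04460 — 3 statements merged into one kernel-verified Lean document; each statement's English description precedes it below -/
import Mathlib

section
/- Let u and v be real-valued random variables and u₀, v₀ real numbers. Then for all ε > 0: P(|uv − u₀v₀| > ε) ≤ P(|u − u₀| > (1/2)·ε/(|v₀|² + ε)^(1/2)) + P(|v − v₀| > (1/2)·ε/(|u₀|² + ε)^(1/2)). -/
open MeasureTheory

/-- Product disentangling inequality: for random variables `u, v` and reals `u₀, v₀, ε > 0`,
`P(|uv − u₀v₀| > ε) ≤ P(|u − u₀| > ε/(2√(v₀²+ε))) + P(|v − v₀| > ε/(2√(u₀²+ε)))`. -/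
theorem stmt3 {Ω : Type*} [MeasurableSpace Ω] (μ : Measure Ω) [IsProbabilityMeasure μ]
    (u v : Ω → ℝ) (hu : Measurable u) (hv : Measurable v)
    (u₀ v₀ : ℝ) (ε : ℝ) (hε : 0 < ε) :
    μ {ω | |u ω * v ω - u₀ * v₀| > ε} ≤
      μ {ω | |u ω - u₀| > (1 / 2) * ε / Real.sqrt (v₀ ^ 2 + ε)} +
      μ {ω | |v ω - v₀| > (1 / 2) * ε / Real.sqrt (u₀ ^ 2 + ε)} := by
  set S := Real.sqrt (u₀ ^ 2 + ε) with hSdef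
  set T := Real.sqrt (v₀ ^ 2 + ε) with hTdef
  have hS : 0 < S := Real.sqrt_pos.mpr (by positivity)
  have hT : 0 < T := Real.sqrt_pos.mpr (by positivity)
  have hS2 : S ^ 2 = u₀ ^ 2 + ε := Real.sq_sqrt (by positivity)
  have hT2 : T ^ 2 = v₀ ^ 2 + ε := Real.sq_sqrt (by positivity)
  have hs : |u₀| ≤ S := by
    rw [hSdef, ← Real.sqrt_sq_eq_abs]
    exact Real.sqrt_le_sqrt (by linarith)
  have ht : |v₀| ≤ T := by
    rw [hTdef, ← Real.sqrt_sq_eq_abs]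
    exact Real.sqrt_le_sqrt (by linarith)
  have hST : |u₀| * |v₀| + ε ≤ S * T := by
    have h1 : (|u₀| * |v₀| + ε) ^ 2 ≤ (S * T) ^ 2 := by
      have : (S * T) ^ 2 = (u₀ ^ 2 + ε) * (v₀ ^ 2 + ε) := by
        rw [mul_pow, hS2, hT2]
      rw [this]
      have hab : |u₀| ^ 2 = u₀ ^ 2 := sq_abs _
      have hcd : |v₀| ^ 2 = v₀ ^ 2 := sq_abs _
      nlinarith [sq_nonneg (|u₀| - |v₀|), abs_nonneg u₀, abs_nonneg v₀]
    have h2 : 0 ≤ |u₀| * |v₀| + ε := by positivity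
    nlinarith [mul_pos hS hT]
  have hsub : {ω | |u ω * v ω - u₀ * v₀| > ε} ⊆
      {ω | |u ω - u₀| > (1 / 2) * ε / T} ∪ {ω | |v ω - v₀| > (1 / 2) * ε / S} := by
    intro ω hω
    by_contra h
    simp only [Set.mem_union, Set.mem_setOf_eq, not_or, not_lt] at h
    obtain ⟨ha, hb⟩ := h
    have hω' : ε < |u ω * v ω - u₀ * v₀| := hω
    set x := u ω
    set y := v ω
    have ha' : |x - u₀| * T ≤ (1 / 2) * ε := (le_div_iff₀ hT).mp ha
    have hb' : |y - v₀| * S ≤ (1 / 2) * ε := (le_div_iff₀ hS).mp hb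
    have key : |x * y - u₀ * v₀| ≤
        |x - u₀| * |y - v₀| + |u₀| * |y - v₀| + |v₀| * |x - u₀| := by
      have heq : x * y - u₀ * v₀ = (x - u₀) * (y - v₀) + u₀ * (y - v₀) + v₀ * (x - u₀) := by
        ring
      rw [heq]
      calc |(x - u₀) * (y - v₀) + u₀ * (y - v₀) + v₀ * (x - u₀)|
          ≤ |(x - u₀) * (y - v₀) + u₀ * (y - v₀)| + |v₀ * (x - u₀)| := abs_add_le _ _
        _ ≤ |(x - u₀) * (y - v₀)| + |u₀ * (y - v₀)| + |v₀ * (x - u₀)| := by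
            have := abs_add_le ((x - u₀) * (y - v₀)) (u₀ * (y - v₀))
            linarith
        _ = |x - u₀| * |y - v₀| + |u₀| * |y - v₀| + |v₀| * |x - u₀| := by
            rw [abs_mul, abs_mul, abs_mul]
    set p := |x - u₀|
    set q := |y - v₀|
    have hp : 0 ≤ p := abs_nonneg _
    have hq : 0 ≤ q := abs_nonneg _
    have hs0 : 0 ≤ |u₀| := abs_nonneg _
    have ht0 : 0 ≤ |v₀| := abs_nonneg _
    -- aim: p*q + |u₀|*q + |v₀|*p ≤ ε, contradicting hω'
    have hfin : 2 * (S * T) * ε < 2 * (S * T) * (p * q + |u₀| * q + |v₀| * p) := by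
      have := mul_pos hS hT
      nlinarith [hω', key]
    have hmain : 2 * (S * T) * (p * q + |u₀| * q + |v₀| * p) ≤ 2 * (S * T) * ε := by
      nlinarith [mul_le_mul ha' hb' (by positivity : (0:ℝ) ≤ q * S) (by positivity : (0:ℝ) ≤ (1/2) * ε),
        mul_le_mul_of_nonneg_left ha' ht0,
        mul_le_mul_of_nonneg_left hb' hs0,
        mul_nonneg (sub_nonneg.mpr hs) (sub_nonneg.mpr ht),
        mul_pos hS hT, hST, hε.le, mul_le_mul_of_nonneg_left hs (mul_nonneg hε.le hT.le),
        mul_le_mul_of_nonneg_left ht (mul_nonneg hε.le hS.le)]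
    linarith
  calc μ {ω | |u ω * v ω - u₀ * v₀| > ε}
      ≤ μ ({ω | |u ω - u₀| > (1 / 2) * ε / T} ∪ {ω | |v ω - v₀| > (1 / 2) * ε / S}) :=
        measure_mono hsub
    _ ≤ _ := measure_union_le _ _
end

section
/- Let X_t and â_t, t = 1,…,n, be sequences of random variables on a common probability space, and α_t, t = 1,…,n, a sequence of real numbers. Suppose there exists m₂² > 0 with max_{t=1,…,n} E[X_t²] ≤ m₂² < ∞. Then for any ε > 0: P(|Σ_{t=1}^n (â_t X_t − α_t E[X_t])| > nε) ≤ P(sup_{t=1,…,n} |â_t − α_t| > ε/(2·((2m₂²)² + ε²)^(1/4))) + P(|Σ_{t=1}^n (X_t² − E[X_t²])| > nε/2) + P(|Σ_{t=1}^n α_t(X_t − E[X_t])| > nε/2). -/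
/-!
On the event where none of the three right-hand events occurs, split
`∑ (â_t X_t − α_t E X_t) = ∑ (â_t − α_t) X_t + ∑ α_t (X_t − E X_t)`.
The second sum is at most `nε/2`. For the first, Cauchy–Schwarz gives
`∑ |X_t| ≤ n √(m₂² + ε/2)` since `∑ X_t² ≤ n (m₂² + ε/2)`, and
`(m₂² + ε/2)² ≤ (2m₂²)² + ε²`, so the threshold on `sup |â_t − α_t|` makes it at most `nε/2` too.
-/

open MeasureTheory Finset

lemma sum_abs_le_card_mul_sqrt {ι : Type*} (s : Finset ι) {x : ι → ℝ} {B : ℝ}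
    (hx : ∑ i ∈ s, x i ^ 2 ≤ #s * B) : ∑ i ∈ s, |x i| ≤ #s * √B := by
  have hcs : (∑ i ∈ s, |x i|) ^ 2 ≤ #s * ∑ i ∈ s, x i ^ 2 := by
    simpa only [sq_abs] using sq_sum_le_card_mul_sum_sq (s := s) (f := fun i => |x i|)
  calc ∑ i ∈ s, |x i| ≤ √(#s * ∑ i ∈ s, x i ^ 2) := (le_abs_self _).trans (Real.abs_le_sqrt hcs)
    _ ≤ √(#s * #s * B) := by rw [mul_assoc]; gcongr
    _ = #s * √B := by rw [Real.sqrt_mul (by positivity), Real.sqrt_mul_self (by positivity)]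

lemma abs_sum_mul_le_of_abs_le {ι : Type*} (s : Finset ι) {d x : ι → ℝ} {δ B : ℝ}
    (hδ : 0 ≤ δ) (hd : ∀ i ∈ s, |d i| ≤ δ) (hx : ∑ i ∈ s, x i ^ 2 ≤ #s * B) :
    |∑ i ∈ s, d i * x i| ≤ δ * (#s * √B) :=
  calc |∑ i ∈ s, d i * x i| ≤ ∑ i ∈ s, |d i| * |x i| := by
        simpa only [abs_mul] using abs_sum_le_sum_abs (fun i => d i * x i) s
    _ ≤ ∑ i ∈ s, δ * |x i| := by gcongr with i hi; exact hd i hi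
    _ = δ * ∑ i ∈ s, |x i| := (mul_sum s _ δ).symm
    _ ≤ δ * (#s * √B) := mul_le_mul_of_nonneg_left (sum_abs_le_card_mul_sqrt s hx) hδ

lemma sqrt_add_half_le_rpow_quarter (M ε : ℝ) :
    √(M + ε / 2) ≤ ((2 * M) ^ 2 + ε ^ 2) ^ ((1 : ℝ) / 4) :=
  calc √(M + ε / 2) ≤ √√((2 * M) ^ 2 + ε ^ 2) :=
        Real.sqrt_le_sqrt <| (le_abs_self _).trans <| Real.abs_le_sqrt <| by
          nlinarith [sq_nonneg (M - ε / 2), sq_nonneg M, sq_nonneg ε]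
    _ = ((2 * M) ^ 2 + ε ^ 2) ^ ((1 : ℝ) / 4) := by
        rw [Real.sqrt_eq_rpow, Real.sqrt_eq_rpow, ← Real.rpow_mul (by positivity)]
        norm_num

lemma abs_sum_mul_sub_le {ι : Type*} [Fintype ι] (a x α m v : ι → ℝ) {M ε : ℝ} (hε : 0 < ε)
    (hv : ∀ t, v t ≤ M)
    (ha : ⨆ t, |a t - α t| ≤ ε / (2 * ((2 * M) ^ 2 + ε ^ 2) ^ ((1 : ℝ) / 4)))
    (hsq : |∑ t, (x t ^ 2 - v t)| ≤ Fintype.card ι * ε / 2)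
    (hlin : |∑ t, α t * (x t - m t)| ≤ Fintype.card ι * ε / 2) :
    |∑ t, (a t * x t - α t * m t)| ≤ Fintype.card ι * ε := by
  set c := ((2 * M) ^ 2 + ε ^ 2) ^ ((1 : ℝ) / 4)
  have hc : 0 < c := Real.rpow_pos_of_pos (by positivity) _
  have hd : ∀ t ∈ univ, |a t - α t| ≤ ε / (2 * c) := fun t _ =>
    (le_ciSup (Set.finite_range _).bddAbove t).trans ha
  have hx : ∑ t, x t ^ 2 ≤ #(univ : Finset ι) * (M + ε / 2) := by
    have hvM : ∑ t, v t ≤ ∑ _t : ι, M := sum_le_sum fun t _ => hv t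
    rw [sum_sub_distrib] at hsq
    simp only [sum_const, nsmul_eq_mul, card_univ] at hvM ⊢
    linarith [le_abs_self (∑ t, x t ^ 2 - ∑ t, v t)]
  have hfirst : |∑ t, (a t - α t) * x t| ≤ Fintype.card ι * ε / 2 :=
    calc |∑ t, (a t - α t) * x t| ≤ ε / (2 * c) * (Fintype.card ι * √(M + ε / 2)) := by
          simpa only [card_univ] using abs_sum_mul_le_of_abs_le univ (by positivity) hd hx
      _ ≤ ε / (2 * c) * (Fintype.card ι * c) := by
          gcongr; exact sqrt_add_half_le_rpow_quarter M ε
      _ = Fintype.card ι * ε / 2 := by field_simp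
  have hsplit : ∑ t, (a t * x t - α t * m t) =
      ∑ t, (a t - α t) * x t + ∑ t, α t * (x t - m t) := by
    rw [← sum_add_distrib]; exact sum_congr rfl fun t _ => by ring
  rw [hsplit]
  linarith [abs_add_le (∑ t, (a t - α t) * x t) (∑ t, α t * (x t - m t))]

theorem stmt4_general {Ω : Type*} [MeasurableSpace Ω] (μ : Measure Ω)
    (n : ℕ)
    (X ahat : Fin n → Ω → ℝ) (α : Fin n → ℝ)
    (m2sq : ℝ)
    (hbound : ∀ t, ∫ ω, (X t ω) ^ 2 ∂μ ≤ m2sq)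
    (ε : ℝ) (hε : 0 < ε) :
    μ {ω | |∑ t, (ahat t ω * X t ω - α t * ∫ ω', X t ω' ∂μ)| > (n : ℝ) * ε} ≤
      μ {ω | (⨆ t, |ahat t ω - α t|) >
          ε / (2 * ((2 * m2sq) ^ 2 + ε ^ 2) ^ ((1 : ℝ) / 4))} +
      μ {ω | |∑ t, ((X t ω) ^ 2 - ∫ ω', (X t ω') ^ 2 ∂μ)| > (n : ℝ) * ε / 2} +
      μ {ω | |∑ t, α t * (X t ω - ∫ ω', X t ω' ∂μ)| > (n : ℝ) * ε / 2} := by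
  have hsub : {ω | |∑ t, (ahat t ω * X t ω - α t * ∫ ω', X t ω' ∂μ)| > (n : ℝ) * ε} ⊆
      {ω | (⨆ t, |ahat t ω - α t|) > ε / (2 * ((2 * m2sq) ^ 2 + ε ^ 2) ^ ((1 : ℝ) / 4))} ∪
      {ω | |∑ t, ((X t ω) ^ 2 - ∫ ω', (X t ω') ^ 2 ∂μ)| > (n : ℝ) * ε / 2} ∪
      {ω | |∑ t, α t * (X t ω - ∫ ω', X t ω' ∂μ)| > (n : ℝ) * ε / 2} := by
    intro ω hω
    by_contra h
    simp only [Set.mem_union, Set.mem_ofPred_eq, not_or, gt_iff_lt, not_lt] at h hω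
    obtain ⟨⟨ha, hsq⟩, hlin⟩ := h
    have := abs_sum_mul_sub_le (ahat · ω) (X · ω) α _ _ hε hbound ha
      (by simpa only [Fintype.card_fin] using hsq) (by simpa only [Fintype.card_fin] using hlin)
    simp only [Fintype.card_fin] at this
    linarith
  exact (measure_mono hsub).trans <|
    (measure_union_le _ _).trans (add_le_add_left (measure_union_le _ _) _)

/-- Disentangling a sum with random coefficients: if `E[X_t²] ≤ m₂²` for all `t`, then
`P(|Σ (â_t X_t − α_t E X_t)| > nε)` is bounded by the sum of the three probabilities on the
right-hand side. -/
theorem stmt4 {Ω : Type*} [MeasurableSpace Ω] (μ : Measure Ω) [IsProbabilityMeasure μ]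
    (n : ℕ) (hn : 0 < n)
    (X ahat : Fin n → Ω → ℝ) (α : Fin n → ℝ)
    (hXmeas : ∀ t, Measurable (X t)) (hameas : ∀ t, Measurable (ahat t))
    (hXint : ∀ t, Integrable (X t) μ)
    (hX2int : ∀ t, Integrable (fun ω => (X t ω) ^ 2) μ)
    (m2sq : ℝ) (hm2 : 0 < m2sq)
    (hbound : ∀ t, ∫ ω, (X t ω) ^ 2 ∂μ ≤ m2sq)
    (ε : ℝ) (hε : 0 < ε) :
    μ {ω | |∑ t, (ahat t ω * X t ω - α t * ∫ ω', X t ω' ∂μ)| > (n : ℝ) * ε} ≤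
      μ {ω | (⨆ t, |ahat t ω - α t|) >
          ε / (2 * ((2 * m2sq) ^ 2 + ε ^ 2) ^ ((1 : ℝ) / 4))} +
      μ {ω | |∑ t, ((X t ω) ^ 2 - ∫ ω', (X t ω') ^ 2 ∂μ)| > (n : ℝ) * ε / 2} +
      μ {ω | |∑ t, α t * (X t ω - ∫ ω', X t ω' ∂μ)| > (n : ℝ) * ε / 2} :=
  stmt4_general μ n X ahat α m2sq hbound ε hε
end

section
/- Let M be a random p×p real matrix with expectation M₀ := E[M] invertible, and v a random vector in ℝᵖ with expectation v₀ := E[v]. Let ‖·‖_M be a submultiplicative matrix norm compatible with a vector norm ‖·‖_v, and define M⁻¹v as the inverse of M applied to v whenever M is invertible and 0 otherwise. Then for every ε > 0: P(‖M⁻¹v − M₀⁻¹v₀‖_v > ε) ≤ P(‖M − M₀‖_M > 1/(2‖M₀⁻¹‖_M)) + P(‖v − v₀‖_v > (ε/4)·(1/‖M₀⁻¹‖_M)) + P(‖M − M₀‖_M > (ε/4)·1/((‖M₀⁻¹‖_M)²·‖v₀‖_v))·1{‖v₀‖_v ≠ 0}. -/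
open MeasureTheory

/- Probability bound for `‖M⁻¹v − M₀⁻¹v₀‖`: here `(M ω)⁻¹` is the Mathlib matrix inverse,
which equals the true inverse when `M ω` is invertible and `0` otherwise. -/
open Classical in
theorem stmt5 {Ω : Type*} [MeasurableSpace Ω] (μ : Measure Ω) [IsProbabilityMeasure μ]
    (p : ℕ)
    (NM : Matrix (Fin p) (Fin p) ℝ → ℝ) (Nv : (Fin p → ℝ) → ℝ)
    (hNM_nonneg : ∀ A, 0 ≤ NM A)
    (hNM_def : ∀ A, NM A = 0 → A = 0)
    (hNM_smul : ∀ (c : ℝ) (A : Matrix (Fin p) (Fin p) ℝ), NM (c • A) = |c| * NM A)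
    (hNM_add : ∀ A B, NM (A + B) ≤ NM A + NM B)
    (hNM_mul : ∀ A B, NM (A * B) ≤ NM A * NM B)
    (hNv_nonneg : ∀ x, 0 ≤ Nv x)
    (hNv_def : ∀ x, Nv x = 0 → x = 0)
    (hNv_smul : ∀ (c : ℝ) (x : Fin p → ℝ), Nv (c • x) = |c| * Nv x)
    (hNv_add : ∀ x y, Nv (x + y) ≤ Nv x + Nv y)
    (hcompat : ∀ (A : Matrix (Fin p) (Fin p) ℝ) (x : Fin p → ℝ),
      Nv (A.mulVec x) ≤ NM A * Nv x)
    (M : Ω → Matrix (Fin p) (Fin p) ℝ) (v : Ω → Fin p → ℝ)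
    (hMmeas : ∀ i j, Measurable fun ω => M ω i j)
    (hvmeas : ∀ i, Measurable fun ω => v ω i)
    (hMint : ∀ i j, Integrable (fun ω => M ω i j) μ)
    (hvint : ∀ i, Integrable (fun ω => v ω i) μ)
    (M₀ : Matrix (Fin p) (Fin p) ℝ) (v₀ : Fin p → ℝ)
    (hM₀ : ∀ i j, M₀ i j = ∫ ω, M ω i j ∂μ)
    (hv₀ : ∀ i, v₀ i = ∫ ω, v ω i ∂μ)
    (hM₀unit : IsUnit M₀)
    (ε : ℝ) (hε : 0 < ε) :
    μ {ω | Nv ((M ω)⁻¹.mulVec (v ω) - M₀⁻¹.mulVec v₀) > ε} ≤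
      μ {ω | NM (M ω - M₀) > 1 / (2 * NM (M₀⁻¹))} +
      μ {ω | Nv (v ω - v₀) > (ε / 4) * (1 / NM (M₀⁻¹))} +
      (if Nv v₀ = 0 then 0
        else μ {ω | NM (M ω - M₀) > (ε / 4) * (1 / ((NM (M₀⁻¹)) ^ 2 * Nv v₀))}) := by
  have hNv_zero : Nv (0 : Fin p → ℝ) = 0 := by
    have := hNv_smul 0 0
    simpa using this
  have hNM_neg : ∀ A, NM (-A) = NM A := fun A => by
    have := hNM_smul (-1) A
    simpa using this
  have hNv_neg : ∀ x, Nv (-x) = Nv x := fun x => by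
    have := hNv_smul (-1) x
    simpa using this
  have hNM_sub : ∀ A B, NM (A - B) ≤ NM A + NM B := by
    intro A B
    rw [sub_eq_add_neg]
    exact le_trans (hNM_add _ _) (by rw [hNM_neg])
  -- trivial case p = 0
  rcases Nat.eq_zero_or_pos p with hp | hp
  · have hempty : {ω | Nv ((M ω)⁻¹.mulVec (v ω) - M₀⁻¹.mulVec v₀) > ε} = ∅ := by
      ext ω
      simp only [Set.mem_setOf_eq, Set.mem_empty_iff_false, iff_false, not_lt]
      have : Subsingleton (Fin p → ℝ) := by
        subst hp
        infer_instance
      rw [Subsingleton.elim ((M ω)⁻¹.mulVec (v ω) - M₀⁻¹.mulVec v₀) 0, hNv_zero]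
      exact le_of_lt hε
    rw [hempty, measure_empty]
    exact zero_le
  -- main case
  set N : ℝ := NM M₀⁻¹ with hNdef
  have hdet : IsUnit M₀.det := Matrix.isUnit_iff_isUnit_det M₀ |>.mp hM₀unit
  have hNpos : 0 < N := by
    rcases lt_or_eq_of_le (hNM_nonneg M₀⁻¹) with h | h
    · exact h
    · exfalso
      have hinv0 : M₀⁻¹ = 0 := hNM_def _ h.symm
      have h1 : M₀⁻¹ * M₀ = 1 := Matrix.nonsing_inv_mul M₀ hdet
      rw [hinv0, zero_mul] at h1
      have := congrFun (congrFun h1 ⟨0, hp⟩) ⟨0, hp⟩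
      simp [Matrix.one_apply] at this
  -- the key pointwise implication
  have key : ∀ ω, NM (M ω - M₀) ≤ 1 / (2 * N) → Nv (v ω - v₀) ≤ (ε / 4) * (1 / N) →
      (Nv v₀ = 0 ∨ NM (M ω - M₀) ≤ (ε / 4) * (1 / (N ^ 2 * Nv v₀))) →
      Nv ((M ω)⁻¹.mulVec (v ω) - M₀⁻¹.mulVec v₀) ≤ ε := by
    intro ω hA hB hC
    set A : Matrix (Fin p) (Fin p) ℝ := M ω with hAdef
    set ΔM : Matrix (Fin p) (Fin p) ℝ := A - M₀ with hΔM
    set Δv : Fin p → ℝ := v ω - v₀ with hΔv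
    have hd_nonneg : 0 ≤ NM ΔM := hNM_nonneg _
    -- invertibility of 1 + M₀⁻¹ * ΔM
    have hE : NM (M₀⁻¹ * ΔM) ≤ 1 / 2 := by
      refine le_trans (hNM_mul _ _) ?_
      have : N * NM ΔM ≤ N * (1 / (2 * N)) :=
        mul_le_mul_of_nonneg_left hA (le_of_lt hNpos)
      calc N * NM ΔM ≤ N * (1 / (2 * N)) := this
        _ = 1 / 2 := by field_simp
    have hunit1 : IsUnit (1 + M₀⁻¹ * ΔM) := by
      rw [← Matrix.mulVec_injective_iff_isUnit]
      intro x y hxy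
      have hz : (1 + M₀⁻¹ * ΔM).mulVec (x - y) = 0 := by
        rw [Matrix.mulVec_sub, hxy, sub_self]
      set z := x - y with hzdef
      have hz2 : z + (M₀⁻¹ * ΔM).mulVec z = 0 := by
        rw [Matrix.add_mulVec, Matrix.one_mulVec] at hz
        exact hz
      have hz3 : z = -((M₀⁻¹ * ΔM).mulVec z) := by
        rw [eq_neg_iff_add_eq_zero]
        exact hz2
      have hb : Nv z ≤ (1 / 2) * Nv z := by
        calc Nv z = Nv (-((M₀⁻¹ * ΔM).mulVec z)) := congrArg Nv hz3
          _ = Nv ((M₀⁻¹ * ΔM).mulVec z) := hNv_neg _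
          _ ≤ NM (M₀⁻¹ * ΔM) * Nv z := hcompat _ _
          _ ≤ (1 / 2) * Nv z := mul_le_mul_of_nonneg_right hE (hNv_nonneg _)
      have hz0 : Nv z = 0 := le_antisymm (by linarith [hNv_nonneg z]) (hNv_nonneg z)
      have := hNv_def z hz0
      exact sub_eq_zero.mp this
    have hA_eq : A = M₀ * (1 + M₀⁻¹ * ΔM) := by
      rw [mul_add, mul_one, ← mul_assoc, Matrix.mul_nonsing_inv M₀ hdet, one_mul, hΔM]
      abel
    have hAunit : IsUnit A := by
      rw [hA_eq]
      exact hM₀unit.mul hunit1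
    have hdetA : IsUnit A.det := Matrix.isUnit_iff_isUnit_det A |>.mp hAunit
    -- key algebraic identity
    have hid : A⁻¹ * ΔM * M₀⁻¹ = M₀⁻¹ - A⁻¹ := by
      rw [hΔM, mul_sub, Matrix.nonsing_inv_mul A hdetA, sub_mul, one_mul, mul_assoc,
        Matrix.mul_nonsing_inv M₀ hdet, mul_one]
    -- bound on NM A⁻¹
    have hKbound : NM A⁻¹ ≤ 2 * N := by
      have h1 : A⁻¹ = M₀⁻¹ - A⁻¹ * ΔM * M₀⁻¹ := by rw [hid]; abel
      have h2 : NM A⁻¹ ≤ N + NM (A⁻¹ * ΔM * M₀⁻¹) := by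
        calc NM A⁻¹ = NM (M₀⁻¹ - A⁻¹ * ΔM * M₀⁻¹) := by rw [← h1]
          _ ≤ N + NM (A⁻¹ * ΔM * M₀⁻¹) := hNM_sub _ _
      have h3 : NM (A⁻¹ * ΔM * M₀⁻¹) ≤ NM A⁻¹ * NM ΔM * N :=
        le_trans (hNM_mul _ _) (mul_le_mul_of_nonneg_right (hNM_mul _ _) (hNM_nonneg _))
      have h4 : NM A⁻¹ * NM ΔM * N ≤ NM A⁻¹ * (1 / (2 * N)) * N := by
        apply mul_le_mul_of_nonneg_right _ (le_of_lt hNpos)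
        exact mul_le_mul_of_nonneg_left hA (hNM_nonneg _)
      have h5 : NM A⁻¹ * (1 / (2 * N)) * N = NM A⁻¹ / 2 := by field_simp
      have := hNM_nonneg A⁻¹
      linarith
    -- bound on NM (A⁻¹ - M₀⁻¹)
    have hDbound : NM (A⁻¹ - M₀⁻¹) ≤ 2 * N * NM ΔM * N := by
      have h1 : A⁻¹ - M₀⁻¹ = -(A⁻¹ * ΔM * M₀⁻¹) := by rw [hid]; abel
      rw [h1, hNM_neg]
      calc NM (A⁻¹ * ΔM * M₀⁻¹) ≤ NM A⁻¹ * NM ΔM * N :=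
            le_trans (hNM_mul _ _) (mul_le_mul_of_nonneg_right (hNM_mul _ _) (hNM_nonneg _))
        _ ≤ 2 * N * NM ΔM * N := by
            apply mul_le_mul_of_nonneg_right _ (le_of_lt hNpos)
            exact mul_le_mul_of_nonneg_right hKbound hd_nonneg
    -- decomposition
    have hdecomp : A⁻¹.mulVec (v ω) - M₀⁻¹.mulVec v₀ =
        A⁻¹.mulVec Δv + (A⁻¹ - M₀⁻¹).mulVec v₀ := by
      rw [hΔv, Matrix.mulVec_sub, Matrix.sub_mulVec]
      abel
    have step1 : Nv (A⁻¹.mulVec Δv) ≤ ε / 2 := by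
      calc Nv (A⁻¹.mulVec Δv) ≤ NM A⁻¹ * Nv Δv := hcompat _ _
        _ ≤ (2 * N) * ((ε / 4) * (1 / N)) := by
            apply mul_le_mul hKbound hB (hNv_nonneg _) (by linarith)
        _ = ε / 2 := by field_simp; ring
    have step2 : Nv ((A⁻¹ - M₀⁻¹).mulVec v₀) ≤ ε / 2 := by
      by_cases hvv : Nv v₀ = 0
      · calc Nv ((A⁻¹ - M₀⁻¹).mulVec v₀) ≤ NM (A⁻¹ - M₀⁻¹) * Nv v₀ := hcompat _ _
          _ = 0 := by rw [hvv, mul_zero]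
          _ ≤ ε / 2 := by linarith
      · have hC' : NM ΔM ≤ (ε / 4) * (1 / (N ^ 2 * Nv v₀)) := hC.resolve_left hvv
        have hv0pos : 0 < Nv v₀ := lt_of_le_of_ne (hNv_nonneg _) (Ne.symm hvv)
        calc Nv ((A⁻¹ - M₀⁻¹).mulVec v₀) ≤ NM (A⁻¹ - M₀⁻¹) * Nv v₀ := hcompat _ _
          _ ≤ (2 * N * NM ΔM * N) * Nv v₀ :=
              mul_le_mul_of_nonneg_right hDbound (hNv_nonneg _)
          _ ≤ (2 * N * ((ε / 4) * (1 / (N ^ 2 * Nv v₀))) * N) * Nv v₀ := by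
              apply mul_le_mul_of_nonneg_right _ (hNv_nonneg _)
              apply mul_le_mul_of_nonneg_right _ (le_of_lt hNpos)
              exact mul_le_mul_of_nonneg_left hC' (by linarith)
          _ = ε / 2 := by field_simp; ring
    calc Nv (A⁻¹.mulVec (v ω) - M₀⁻¹.mulVec v₀)
        = Nv (A⁻¹.mulVec Δv + (A⁻¹ - M₀⁻¹).mulVec v₀) := by rw [hdecomp]
      _ ≤ Nv (A⁻¹.mulVec Δv) + Nv ((A⁻¹ - M₀⁻¹).mulVec v₀) := hNv_add _ _
      _ ≤ ε / 2 + ε / 2 := add_le_add step1 step2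
      _ = ε := by ring
  -- measure-theoretic conclusion
  by_cases hv0 : Nv v₀ = 0
  · rw [if_pos hv0, add_zero]
    refine le_trans (measure_mono ?_) (measure_union_le _ _)
    intro ω hω
    by_contra hc
    simp only [Set.mem_union, Set.mem_setOf_eq, not_or, not_lt] at hc
    exact absurd (key ω hc.1 hc.2 (Or.inl hv0)) (not_le.mpr hω)
  · rw [if_neg hv0]
    calc μ {ω | Nv ((M ω)⁻¹.mulVec (v ω) - M₀⁻¹.mulVec v₀) > ε}
        ≤ μ ({ω | NM (M ω - M₀) > 1 / (2 * N)} ∪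
            {ω | Nv (v ω - v₀) > (ε / 4) * (1 / N)} ∪
            {ω | NM (M ω - M₀) > (ε / 4) * (1 / (N ^ 2 * Nv v₀))}) := by
          apply measure_mono
          intro ω hω
          by_contra hc
          simp only [Set.mem_union, Set.mem_setOf_eq, not_or, not_lt] at hc
          exact absurd (key ω hc.1.1 hc.1.2 (Or.inr hc.2)) (not_le.mpr hω)
      _ ≤ μ ({ω | NM (M ω - M₀) > 1 / (2 * N)} ∪
            {ω | Nv (v ω - v₀) > (ε / 4) * (1 / N)}) +
          μ {ω | NM (M ω - M₀) > (ε / 4) * (1 / (N ^ 2 * Nv v₀))} :=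
          measure_union_le _ _
      _ ≤ _ := add_le_add (measure_union_le _ _) le_rfl
end
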